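/- arXiv:2510.02602 — 3 statements merged into one kernel-verified Lean document; each statement's English description precedes it below -/
import Mathlib

section
/- Let G be a group acting by homeomorphisms as a convergence group on a compact metrizable space M. Let N ⊆ M be a subset with at least 3 points, let ξ ∈ N, and suppose there exist a sequence (g_n) in G and distinct points ξ₊, ξ₋ ∈ N such that g_n·ξ → ξ₋ and g_n·ξ' → ξ₊ for every ξ' ∈ N ∖ {ξ}. Then ξ is a conical limit point for the action of G on M. -/
open Filter Topology

/-- `(g, ξp, ξm)` is an attracting–repelling triple (ART): for every compact set
`K ⊆ M \ {ξm}` and every open neighborhood `U` of `ξp` there exists `N` such that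
`g n • K ⊆ U` for all `n ≥ N`. -/
def IsART {G M : Type*} [Group G] [TopologicalSpace M] [MulAction G M]
    (g : ℕ → G) (ξp ξm : M) : Prop :=
  ∀ K : Set M, IsCompact K → K ⊆ {ξm}ᶜ →
    ∀ U : Set M, IsOpen U → ξp ∈ U →
      ∃ N : ℕ, ∀ n ≥ N, (fun y => g n • y) '' K ⊆ U


lemma exists_strictMono_mem_of_infinite {S : Set ℕ} (hS : S.Infinite) :
    ∃ ψ : ℕ → ℕ, StrictMono ψ ∧ ∀ n, ψ n ∈ S := by
  haveI := hS.to_subtype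
  exact ⟨fun n => (Nat.Subtype.orderIsoOfNat S n : ℕ),
    fun a b h => Subtype.coe_lt_coe.2 ((Nat.Subtype.orderIsoOfNat S).strictMono h),
    fun n => (Nat.Subtype.orderIsoOfNat S n).2⟩

lemma IsART.tendsto {G M : Type*} [Group G] [TopologicalSpace M] [MulAction G M]
    {g : ℕ → G} {ξp ξm : M} (h : IsART g ξp ξm) {ζ : M} (hζ : ζ ≠ ξm) :
    Tendsto (fun n => g n • ζ) atTop (𝓝 ξp) := by
  rw [tendsto_nhds]
  intro U hU hmem
  obtain ⟨N, hN⟩ := h {ζ} isCompact_singleton (by simpa using hζ.symm) U hU hmem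
  exact eventually_atTop.2 ⟨N, fun n hn => hN n hn ⟨ζ, rfl, rfl⟩⟩

lemma exists_ne_ne {α : Type*} {A : Set α}
    (hA : ∃ a ∈ A, ∃ b ∈ A, ∃ c ∈ A, a ≠ b ∧ a ≠ c ∧ b ≠ c)
    (x y : α) : ∃ z ∈ A, z ≠ x ∧ z ≠ y := by
  obtain ⟨a, ha, b, hb, c, hc, hab, hac, hbc⟩ := hA
  by_cases h1 : a ≠ x ∧ a ≠ y
  · exact ⟨a, ha, h1⟩
  by_cases h2 : b ≠ x ∧ b ≠ y
  · exact ⟨b, hb, h2⟩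
  by_cases h3 : c ≠ x ∧ c ≠ y
  · exact ⟨c, hc, h3⟩
  exfalso
  have ha' : a = x ∨ a = y := by tauto
  have hb' : b = x ∨ b = y := by tauto
  have hc' : c = x ∨ c = y := by tauto
  rcases ha' with h|h <;> rcases hb' with h'|h' <;> rcases hc' with h''|h'' <;> simp_all

/-- A group `G` acting on `M` acts as a convergence group if every sequence of pairwise
distinct elements of `G` has a subsequence `(g n)` which is a convergence sequence, i.e.
for which there exist points `ξp, ξm ∈ M` making `(g n, ξp, ξm)` an ART. -/
def IsConvergenceGroupAction (G M : Type*) [Group G] [TopologicalSpace M]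
    [MulAction G M] : Prop :=
  ∀ g : ℕ → G, Function.Injective g →
    ∃ φ : ℕ → ℕ, StrictMono φ ∧ ∃ ξp ξm : M, IsART (g ∘ φ) ξp ξm

/-- A point `ξ ∈ M` is a conical limit point for the `G`-action if there exist a sequence
`(h n)` in `G` and points `ηp ≠ ηm` in `M` such that `h n • ξ → ηm` and `h n • ζ → ηp`
for all `ζ ∈ M \ {ξ}`. -/
def IsConicalLimitPoint (G : Type*) {M : Type*} [Group G] [TopologicalSpace M]
    [MulAction G M] (ξ : M) : Prop :=
  ∃ h : ℕ → G, ∃ ηp ηm : M, ηp ≠ ηm ∧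
    Tendsto (fun n => h n • ξ) atTop (𝓝 ηm) ∧
    ∀ ζ : M, ζ ≠ ξ → Tendsto (fun n => h n • ζ) atTop (𝓝 ηp)

/-- Let `G` act by homeomorphisms as a convergence group on a compact metrizable space `M`.
Let `A ⊆ M` have at least 3 points, let `ξ ∈ A`, and suppose there are a sequence `(g n)`
in `G` and distinct points `ξp, ξm ∈ A` with `g n • ξ → ξm` and `g n • ξ' → ξp` for every
`ξ' ∈ A \ {ξ}`. Then `ξ` is a conical limit point for the action of `G` on `M`. -/
theorem conical_limit_point_of_subset {G M : Type*} [Group G] [TopologicalSpace M]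
    [CompactSpace M] [TopologicalSpace.MetrizableSpace M]
    [MulAction G M] [ContinuousConstSMul G M]
    (hconv : IsConvergenceGroupAction G M)
    (A : Set M) (hA : ∃ a ∈ A, ∃ b ∈ A, ∃ c ∈ A, a ≠ b ∧ a ≠ c ∧ b ≠ c)
    (ξ : M) (hξ : ξ ∈ A)
    (g : ℕ → G) (ξp ξm : M) (hξp : ξp ∈ A) (hξm : ξm ∈ A) (hne : ξp ≠ ξm)
    (hlim : Tendsto (fun n => g n • ξ) atTop (𝓝 ξm))
    (hlim' : ∀ ξ' ∈ A, ξ' ≠ ξ → Tendsto (fun n => g n • ξ') atTop (𝓝 ξp)) :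
    IsConicalLimitPoint G ξ := by
  classical
  letI : MetricSpace M := TopologicalSpace.metrizableSpaceMetric M
  obtain ⟨a, haA, haξ, _⟩ := exists_ne_ne hA ξ ξ
  -- every fiber of g is finite
  have hfib : ∀ x : G, {n : ℕ | g n = x}.Finite := by
    intro x
    by_contra hinf
    obtain ⟨b, hbA, hbξ, hba⟩ := exists_ne_ne hA ξ a
    have hfa : ∃ᶠ n in atTop, g n = x := Nat.frequently_atTop_iff_infinite.2 hinf
    have h1 : x • a = ξp :=
      tendsto_nhds_unique_of_frequently_eq tendsto_const_nhds (hlim' a haA haξ)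
        (hfa.mono fun n hn => by rw [hn])
    have h2 : x • b = ξp :=
      tendsto_nhds_unique_of_frequently_eq tendsto_const_nhds (hlim' b hbA hbξ)
        (hfa.mono fun n hn => by rw [hn])
    exact hba (smul_left_cancel x (h2.trans h1.symm))
  -- the set of first-occurrence indices is infinite
  have hS : {m : ℕ | ∀ k < m, g k ≠ g m}.Infinite := by
    apply Set.infinite_of_forall_exists_gt
    intro N
    have hB : {n : ℕ | ∃ k ≤ N, g n = g k}.Finite := by
      have hsub : {n : ℕ | ∃ k ≤ N, g n = g k} ⊆
          ⋃ k ∈ Finset.range (N + 1), {n : ℕ | g n = g k} := by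
        rintro n ⟨k, hk, he⟩
        exact Set.mem_biUnion (Finset.mem_range.2 (Nat.lt_succ_of_le hk)) he
      exact (Set.Finite.biUnion (Finset.range (N + 1)).finite_toSet
        (fun k _ => hfib (g k))).subset hsub
    obtain ⟨b, hb⟩ := hB.bddAbove
    set m₀ := max b N + 1 with hm₀def
    have hm₀N : N < m₀ := lt_of_le_of_lt (le_max_right b N) (Nat.lt_succ_self _)
    have hm₀B : m₀ ∉ {n : ℕ | ∃ k ≤ N, g n = g k} := by
      intro hmem
      exact absurd (hb hmem) (not_le.2 (lt_of_le_of_lt (le_max_left b N) (Nat.lt_succ_self _)))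
    have hex : ∃ k, g k = g m₀ := ⟨m₀, rfl⟩
    refine ⟨Nat.find hex, ?_, ?_⟩
    · intro k hk
      rw [Nat.find_spec hex]
      exact Nat.find_min hex hk
    · by_contra hle
      push_neg at hle
      exact hm₀B ⟨Nat.find hex, hle, (Nat.find_spec hex).symm⟩
  obtain ⟨ψ, hψmono, hψmem⟩ := exists_strictMono_mem_of_infinite hS
  have hinj : Function.Injective (g ∘ ψ) := by
    intro i j hij
    rcases lt_trichotomy i j with h | h | h
    · exact absurd hij (hψmem j (ψ i) (hψmono h))
    · exact h
    · exact absurd hij.symm (hψmem i (ψ j) (hψmono h))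
  obtain ⟨φ, hφ, ηp, ηm, hART⟩ := hconv (g ∘ ψ) hinj
  have hcomp : Tendsto (ψ ∘ φ) atTop atTop := (hψmono.comp hφ).tendsto_atTop
  have hlimh : Tendsto (fun n => ((g ∘ ψ) ∘ φ) n • ξ) atTop (𝓝 ξm) := hlim.comp hcomp
  have hlimh' : ∀ ξ' ∈ A, ξ' ≠ ξ →
      Tendsto (fun n => ((g ∘ ψ) ∘ φ) n • ξ') atTop (𝓝 ξp) :=
    fun ξ' h1 h2 => (hlim' ξ' h1 h2).comp hcomp
  obtain ⟨c, hcA, hcξ, hcηm⟩ := exists_ne_ne hA ξ ηm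
  have hp : ηp = ξp := tendsto_nhds_unique (hART.tendsto hcηm) (hlimh' c hcA hcξ)
  have hm : ηm = ξ := by
    by_contra hmx
    have hq : ηp = ξm := tendsto_nhds_unique (hART.tendsto (Ne.symm hmx)) hlimh
    exact hne (hp.symm.trans hq)
  refine ⟨(g ∘ ψ) ∘ φ, ξp, ξm, hne, hlimh, fun ζ hζ => ?_⟩
  have hζm : ζ ≠ ηm := by rw [hm]; exact hζ
  exact hp ▸ hART.tendsto hζm
end

section
/- Let G be a group, let H and P be subgroups of G, let m be a positive integer, and let g₀ ∈ G be such that the subgroup D := (g₀ H g₀⁻¹) ∩ P has index at most m in P. Suppose x₁, …, x_{m+1} ∈ G and h₁, …, h_{m+1} ∈ H satisfy g₀ h_i x_i⁻¹ ∈ P for every i = 1, …, m+1. Then there exist indices i ≠ j with x_i H = x_j H. -/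
/-- Pigeonhole lemma for cosets: let `G` be a group, `H, P ≤ G`, `m` a positive integer and
`g₀ ∈ G` such that `D := (g₀ H g₀⁻¹) ⊓ P` has index at most `m` in `P`. If
`x₁, …, x_{m+1} ∈ G` and `h₁, …, h_{m+1} ∈ H` satisfy `g₀ * h i * (x i)⁻¹ ∈ P` for all `i`,
then two of the `x i` determine the same left coset of `H`. -/
theorem coset_pigeonhole {G : Type*} [Group G] (H P : Subgroup G) (m : ℕ) (hm : 0 < m)
    (g₀ : G)
    (hfin : (((Subgroup.map (MulAut.conj g₀).toMonoidHom H) ⊓ P).subgroupOf P).index ≠ 0)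
    (hidx : (((Subgroup.map (MulAut.conj g₀).toMonoidHom H) ⊓ P).subgroupOf P).index ≤ m)
    (x h : Fin (m + 1) → G) (hh : ∀ i, h i ∈ H)
    (hP : ∀ i, g₀ * h i * (x i)⁻¹ ∈ P) :
    ∃ i j : Fin (m + 1), i ≠ j ∧ (x i)⁻¹ * x j ∈ H := by
  set Q := (((Subgroup.map (MulAut.conj g₀).toMonoidHom H) ⊓ P).subgroupOf P) with hQ
  haveI : Finite (P ⧸ Q) := Nat.finite_of_card_ne_zero hfin
  set q : Fin (m + 1) → P := fun i => ⟨(g₀ * h i * (x i)⁻¹)⁻¹, inv_mem (hP i)⟩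
  have hcard : Nat.card (P ⧸ Q) < Nat.card (Fin (m + 1)) := by
    have : Nat.card (P ⧸ Q) = Q.index := rfl
    simp [this]
    omega
  haveI : Fintype (P ⧸ Q) := Fintype.ofFinite _
  rw [Nat.card_eq_fintype_card, Nat.card_eq_fintype_card] at hcard
  obtain ⟨i, j, hne, heq⟩ :=
    Fintype.exists_ne_map_eq_of_card_lt (fun i => QuotientGroup.mk (s := Q) (q i)) hcard
  refine ⟨i, j, hne, ?_⟩
  have hmem : (q i)⁻¹ * q j ∈ Q := QuotientGroup.eq.mp heq
  rw [hQ, Subgroup.mem_subgroupOf] at hmem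
  have hmem' : ((q i)⁻¹ * q j : G) ∈ Subgroup.map (MulAut.conj g₀).toMonoidHom H :=
    hmem.1
  obtain ⟨k, hk, hkeq⟩ := hmem'
  have hq : ((q i)⁻¹ * q j : G) = (g₀ * h i * (x i)⁻¹) * (g₀ * h j * (x j)⁻¹)⁻¹ := by simp [q]
  rw [hq] at hkeq
  simp only [MulAut.conj_apply, MulEquiv.coe_toMonoidHom] at hkeq
  -- g₀ * k * g₀⁻¹ = g₀ * h i * (x i)⁻¹ * (x j * (h j)⁻¹ * g₀⁻¹)
  have h2 : k = (h i) * ((x i)⁻¹ * x j) * (h j)⁻¹ := by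
    have hk2 : k = g₀⁻¹ * (g₀ * k * g₀⁻¹) * g₀ := by group
    rw [hk2, hkeq]; group
  have hx : (x i)⁻¹ * x j = (h i)⁻¹ * k * h j := by rw [h2]; group
  rw [hx]
  exact mul_mem (mul_mem (inv_mem (hh i)) hk) (hh j)
end

section
/- Let X be a geodesic metric space all of whose geodesic triangles are δ-thin, let Y ⊆ X be a K-quasiconvex subset, let p ∈ X, and let x ∈ Y realize the distance from p to Y, i.e. d(p,x) = dist(p,Y). Let y ∈ Y, and let γ_x : [0, d(p,x)] → X and γ_y : [0, d(p,y)] → X be unit-speed geodesics from p to x and from p to y respectively. Then for every t with 0 ≤ t ≤ d(p,x) − K − δ one has d(γ_x(t), γ_y(t)) ≤ δ. -/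
variable {X : Type*} [MetricSpace X]

/-- The Gromov product of `y` and `z` based at `x`:
`(y,z)_x = ½ (d(x,y) + d(x,z) − d(y,z))`. -/
noncomputable def gromovProd (x y z : X) : ℝ := (dist x y + dist x z - dist y z) / 2

/-- `γ : ℝ → X` is a unit-speed geodesic from `x` to `y`, parametrized on
`[0, d(x,y)]`. -/
def IsGeodesicFrom (γ : ℝ → X) (x y : X) : Prop :=
  γ 0 = x ∧ γ (dist x y) = y ∧
    ∀ s t : ℝ, s ∈ Set.Icc 0 (dist x y) → t ∈ Set.Icc 0 (dist x y) →
      dist (γ s) (γ t) = |s - t|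

/-- `X` is a geodesic metric space: any two points are joined by a geodesic. -/
def GeodesicSpace (X : Type*) [MetricSpace X] : Prop :=
  ∀ x y : X, ∃ γ : ℝ → X, IsGeodesicFrom γ x y

/-- All geodesic triangles of `X` are `δ`-thin: two geodesics issuing from a common
vertex `x` towards `y` and `z` stay `δ`-close up to the time given by the Gromov
product `(y,z)_x` (the comparison map to the tripod identifies only points at
distance at most `δ`). -/
def ThinTriangles (X : Type*) [MetricSpace X] (δ : ℝ) : Prop :=
  ∀ x y z : X, ∀ γ₁ γ₂ : ℝ → X, IsGeodesicFrom γ₁ x y → IsGeodesicFrom γ₂ x z →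
    ∀ t : ℝ, 0 ≤ t → t ≤ gromovProd x y z → dist (γ₁ t) (γ₂ t) ≤ δ

/-- `Y ⊆ X` is `K`-quasiconvex: every point on a geodesic segment between two points
of `Y` lies within distance `K` of `Y`. -/
def IsQuasiconvex (K : ℝ) (Y : Set X) : Prop :=
  ∀ y ∈ Y, ∀ z ∈ Y, ∀ γ : ℝ → X, IsGeodesicFrom γ y z →
    ∀ t ∈ Set.Icc (0 : ℝ) (dist y z), Metric.infDist (γ t) Y ≤ K

/-- Fellow-traveling: let `X` be a geodesic metric space all of whose geodesic triangles
are `δ`-thin, `Y ⊆ X` a `K`-quasiconvex subset, `p ∈ X`, and `x ∈ Y` a point realizing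
the distance from `p` to `Y`. Let `y ∈ Y`, and let `γx, γy` be unit-speed geodesics from
`p` to `x` and from `p` to `y` respectively. Then for every `t` with
`0 ≤ t ≤ d(p,x) − K − δ` one has `d(γx t, γy t) ≤ δ`. -/
theorem geodesics_fellow_travel (δ K : ℝ)
    (hgeo : GeodesicSpace X) (hthin : ThinTriangles X δ)
    (Y : Set X) (hY : IsQuasiconvex K Y)
    (p x : X) (hx : x ∈ Y) (hdist : dist p x = Metric.infDist p Y)
    (y : X) (hy : y ∈ Y)
    (γx γy : ℝ → X) (hγx : IsGeodesicFrom γx p x) (hγy : IsGeodesicFrom γy p y) :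
    ∀ t : ℝ, 0 ≤ t → t ≤ dist p x - K - δ → dist (γx t) (γy t) ≤ δ := by
  intro t ht0 ht
  -- geodesics from x to p and from x to y
  obtain ⟨σ₁, hσ₁⟩ := hgeo x p
  obtain ⟨σ₂, hσ₂⟩ := hgeo x y
  set a : ℝ := gromovProd x p y with ha
  have ha0 : 0 ≤ a := by
    have := dist_triangle p x y
    simp only [ha, gromovProd]
    rw [dist_comm x p]
    linarith
  have haxp : a ≤ dist x p := by
    have := dist_triangle x p y
    simp only [ha, gromovProd]
    linarith
  have haxy : a ≤ dist x y := by
    have := dist_triangle x y p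
    simp only [ha, gromovProd]
    rw [dist_comm y p] at this
    linarith
  -- thinness at vertex x
  have hclose : dist (σ₁ a) (σ₂ a) ≤ δ := hthin x p y σ₁ σ₂ hσ₁ hσ₂ a ha0 le_rfl
  -- distance from p to σ₁ a
  have hdps : dist p (σ₁ a) = dist x p - a := by
    have := hσ₁.2.2 (dist x p) a ⟨dist_nonneg, le_rfl⟩ ⟨ha0, haxp⟩
    rw [hσ₁.2.1] at this
    rw [this, abs_of_nonneg (by linarith)]
  -- quasiconvexity
  have hqc : Metric.infDist (σ₂ a) Y ≤ K := hY x hx y hy σ₂ hσ₂ a ⟨ha0, haxy⟩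
  -- infDist p Y ≤ dist p (σ₂ a) + infDist (σ₂ a) Y
  have hchain : dist p x ≤ dist p (σ₂ a) + K := by
    rw [hdist]
    calc Metric.infDist p Y ≤ Metric.infDist (σ₂ a) Y + dist p (σ₂ a) :=
          Metric.infDist_le_infDist_add_dist
      _ ≤ K + dist p (σ₂ a) := by linarith
      _ = dist p (σ₂ a) + K := by ring
  have hp2 : dist p (σ₂ a) ≤ dist p (σ₁ a) + δ := by
    calc dist p (σ₂ a) ≤ dist p (σ₁ a) + dist (σ₁ a) (σ₂ a) := dist_triangle _ _ _
      _ ≤ dist p (σ₁ a) + δ := by linarith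
  have haK : a ≤ K + δ := by
    rw [hdps] at hp2
    rw [dist_comm x p] at hp2
    linarith
  -- Gromov product at p
  have hsum : gromovProd p x y = dist p x - a := by
    simp only [ha, gromovProd]
    rw [dist_comm x p, dist_comm x y, dist_comm p y]
    ring
  have htg : t ≤ gromovProd p x y := by rw [hsum]; linarith
  exact hthin p x y γx γy hγx hγy t ht0 htg
end
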